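/- Let e ≥ 2 be finite and λ a partition containing nodes (i,m) and (i,j) in the same row with m < j. Suppose e divides the hook length h^λ_{(i,j)}. If μ is obtained from λ by unwrapping the rim hook r^λ_{(i,j)} and wrapping a rim hook of the same length back on with hand node in column m, in the manner corresponding to moving a bead on runner f down and another bead on runner f up (where f is the common foot residue), then e also divides the hook length h^λ_{(i,m)}. -/

import Mathlib

noncomputable section

/-- A partition: a weakly decreasing sequence of natural numbers with finite support.
Rows and columns are indexed from `0`. -/
structure Partition' where
  parts : ℕ → ℕ
  antitone : ∀ ⦃i j : ℕ⦄, i ≤ j → parts j ≤ parts i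
  finite_support : ∃ N, ∀ i, N ≤ i → parts i = 0

namespace Partition'

/-- The Young diagram of a partition: cells `(i, j)` with `j < λ_i` (0-indexed). -/
def cells (p : Partition') : Set (ℕ × ℕ) := {x | x.2 < p.parts x.1}

/-- The size `|λ|` of a partition. -/
def size (p : Partition') : ℕ := p.cells.ncard

/-- Two cells are adjacent if they share an edge. -/
def adjacent (a b : ℕ × ℕ) : Prop :=
  (a.1 = b.1 ∧ (a.2 + 1 = b.2 ∨ b.2 + 1 = a.2)) ∨
  (a.2 = b.2 ∧ (a.1 + 1 = b.1 ∨ b.1 + 1 = a.1))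

/-- A set of cells is (edge-)connected. -/
def ConnectedSet (S : Set (ℕ × ℕ)) : Prop :=
  ∀ a ∈ S, ∀ b ∈ S, ∃ (n : ℕ) (f : ℕ → ℕ × ℕ),
    f 0 = a ∧ f n = b ∧ (∀ k < n, adjacent (f k) (f (k + 1))) ∧ (∀ k ≤ n, f k ∈ S)

/-- A set of cells contains no 2×2 square. -/
def No2x2 (S : Set (ℕ × ℕ)) : Prop :=
  ∀ i j : ℕ, ¬ ((i, j) ∈ S ∧ (i + 1, j) ∈ S ∧ (i, j + 1) ∈ S ∧ (i + 1, j + 1) ∈ S)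

/-- `AddRimHook p q h` : the partition `q` is obtained from `p` by wrapping on
(a connected skew shape of size `h` containing no 2×2 square, i.e.) a rim hook of length `h`. -/
def AddRimHook (p q : Partition') (h : ℕ) : Prop :=
  p.cells ⊆ q.cells ∧ (q.cells \ p.cells).ncard = h ∧
    ConnectedSet (q.cells \ p.cells) ∧ No2x2 (q.cells \ p.cells)

/-- The length `λ'_j` of column `j` (0-indexed) of a partition. -/
def colLen (p : Partition') (j : ℕ) : ℕ := {i : ℕ | (i, j) ∈ p.cells}.ncard

/-- The rim hook `r^λ_x` attached to the node `x = (i,j)` of `λ`. -/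
def rimHook (p : Partition') (i j : ℕ) : Set (ℕ × ℕ) :=
  {y ∈ p.cells | i ≤ y.1 ∧ j ≤ y.2 ∧ (y.1 + 1, y.2 + 1) ∉ p.cells}

/-- The leg length of the rim hook `r^λ_{(i,j)}`. -/
def legLength (p : Partition') (i j : ℕ) : ℕ := p.colLen j - 1 - i

/-- The hook length `h^λ_{(i,j)}` of the node `(i,j) ∈ [λ]` (0-indexed). -/
def hookLen (p : Partition') (i j : ℕ) : ℕ := p.parts i + p.colLen j - i - j - 1

/-- The residue mod `e` of the foot node of a rim hook `r^λ_{(i,j)}`; the foot node is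
`(λ'_j - 1, j)` (0-indexed), so its residue is `j - λ'_j + 1 = (j+1) - λ'_j` mod `e`. -/
def footRes (e : ℕ) (p : Partition') (j : ℕ) : ZMod e :=
  (((j : ℤ) + 1 - p.colLen j : ℤ) : ZMod e)

/-- `C_f(λ)` : the number of nodes of `λ` with residue `f` mod `e`, using charge `c`
(the residue of node `(i,j)` (0-indexed) is `j - i + c` mod `e`). -/
def resCount (e : ℕ) (c : ℤ) (p : Partition') (f : ZMod e) : ℕ :=
  {x ∈ p.cells | (((x.2 : ℤ) - x.1 + c : ℤ) : ZMod e) = f}.ncard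

/-- The set of β-numbers of `p` with charge `c` : `β_i = λ_i - i + c` (1-indexed rows). -/
def betaSet (p : Partition') (c : ℤ) : Set ℤ :=
  {z | ∃ i : ℕ, z = (p.parts i : ℤ) - (i + 1) + c}

/-- The dominance order on partitions. -/
def Dominates (p q : Partition') : Prop :=
  ∀ m : ℕ, ∑ i ∈ Finset.range m, q.parts i ≤ ∑ i ∈ Finset.range m, p.parts i

end Partition'

/-!
Reading off contents, a rim hook `r^λ_{(a,b)}` has exactly one cell on each diagonal between its
foot and its hand, so `|r^λ_{(a,b)}| = h^λ_{(a,b)} = c(hand) - c(foot) + 1`. Both rim hooks are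
complements of the same diagram in partitions of the same size, so `h^λ_{(i,j)} = h^μ_{(k,l)}`.
Column `m` of `λ` is untouched by `r^λ_{(i,j)}`, and in `μ` it stops just above the hand row `k`
of the new hook, so `λ'_m = k`. The hand–foot formula then makes `h^λ_{(i,m)}` the difference of
the contents of the two feet, which vanishes mod `e` because the foot residues agree.
-/

lemma exists_crossing_of_le_of_lt {φ : ℕ → ℤ} {t : ℤ} {a c : ℕ} (hac : a ≤ c)
    (ha : t ≤ φ a) (hc : φ (c + 1) < t) :
    ∃ x, a ≤ x ∧ x ≤ c ∧ t ≤ φ x ∧ φ (x + 1) < t := by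
  induction c, hac using Nat.le_induction with
  | base => exact ⟨a, le_rfl, le_rfl, ha, hc⟩
  | succ c hac ih =>
    by_cases ht : t ≤ φ (c + 1)
    · exact ⟨c + 1, by omega, le_rfl, ht, hc⟩
    · obtain ⟨x, hax, hxc, htx, hxt⟩ := ih (not_le.1 ht)
      exact ⟨x, hax, by omega, htx, hxt⟩

namespace Partition'

variable (p : Partition')

def content (x : ℕ × ℕ) : ℤ := (x.2 : ℤ) - x.1

lemma colLen_eq_of_forall_mem_iff {b c : ℕ} (h : ∀ a, (a, b) ∈ p.cells ↔ a < c) :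
    p.colLen b = c := by
  rw [colLen, show {a : ℕ | (a, b) ∈ p.cells} = Set.Iio c from Set.ext h, ← Finset.coe_Iio,
    Set.ncard_coe_finset, Nat.card_Iio]

variable {p}

lemma mem_cells_iff_lt_colLen {a b : ℕ} : (a, b) ∈ p.cells ↔ a < p.colLen b := by
  classical
  have hex : ∃ c, p.parts c ≤ b := by
    obtain ⟨N, hN⟩ := p.finite_support
    exact ⟨N, (hN N le_rfl).trans_le b.zero_le⟩
  have hcol : ∀ a, (a, b) ∈ p.cells ↔ a < Nat.find hex := fun a =>
    ⟨fun ha => not_le.1 fun hle => not_le.2 ha ((p.antitone hle).trans (Nat.find_spec hex)),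
      fun ha => not_le.1 (Nat.find_min hex ha)⟩
  rw [hcol, p.colLen_eq_of_forall_mem_iff hcol]

variable (p)

lemma cells_finite : p.cells.Finite := by
  obtain ⟨N, hN⟩ := p.finite_support
  refine ((Set.finite_Iio N).prod (Set.finite_Iio (p.parts 0))).subset ?_
  rintro ⟨x, y⟩ (hxy : y < p.parts x)
  refine ⟨Set.mem_Iio.2 (not_le.1 fun hNx => ?_), hxy.trans_le (p.antitone x.zero_le)⟩
  rw [hN x hNx] at hxy
  exact y.not_lt_zero hxy

lemma rimHook_subset (a b : ℕ) : p.rimHook a b ⊆ p.cells := fun _ hx => hx.1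

variable {p}

lemma mem_rimHook_iff {a b x y : ℕ} :
    (x, y) ∈ p.rimHook a b ↔ y < p.parts x ∧ a ≤ x ∧ b ≤ y ∧ p.parts (x + 1) ≤ y + 1 := by
  simp only [rimHook, Set.mem_ofPred_eq, cells, not_lt]

-- Content of the hand `(a, λ_a - 1)` minus content of the foot `(λ'_b - 1, b)`, plus one.
lemma natCast_hookLen {a b : ℕ} (hab : (a, b) ∈ p.cells) :
    (p.hookLen a b : ℤ) = ((p.parts a : ℤ) - 1 - a) - ((b : ℤ) + 1 - p.colLen b) + 1 := by
  have hb : b < p.parts a := hab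
  have ha : a < p.colLen b := mem_cells_iff_lt_colLen.1 hab
  simp only [hookLen]
  omega

lemma content_mem_Icc_of_mem_rimHook {a b : ℕ} {z : ℕ × ℕ} (hz : z ∈ p.rimHook a b) :
    content z ∈ Set.Icc ((b : ℤ) + 1 - p.colLen b) ((p.parts a : ℤ) - 1 - a) := by
  obtain ⟨x, y⟩ := z
  obtain ⟨hy, hax, hby, -⟩ := mem_rimHook_iff.1 hz
  have hx : x < p.colLen b := mem_cells_iff_lt_colLen.1 (show b < p.parts x by omega)
  have hpa : p.parts x ≤ p.parts a := p.antitone hax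
  simp only [content, Set.mem_Icc]
  omega

lemma injOn_content_rimHook (a b : ℕ) : Set.InjOn content (p.rimHook a b) := by
  -- Two cells of equal content in different rows would force `(x + 1, y + 1)` into `λ`.
  suffices ∀ x y x' y', (x, y) ∈ p.rimHook a b → (x', y') ∈ p.rimHook a b → x < x' →
      (y : ℤ) - x ≠ (y' : ℤ) - x' by
    rintro ⟨x, y⟩ hz ⟨x', y'⟩ hz' (heq : (y : ℤ) - x = (y' : ℤ) - x')
    rcases lt_trichotomy x x' with h | rfl | h
    · exact absurd heq (this x y x' y' hz hz' h)
    · simp only [Prod.mk.injEq, true_and]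
      omega
    · exact absurd heq.symm (this x' y' x y hz' hz h)
  intro x y x' y' hz hz' hxx' heq
  have hx := (mem_rimHook_iff.1 hz).2.2.2
  have hx' := (mem_rimHook_iff.1 hz').1
  have hmono : p.parts x' ≤ p.parts (x + 1) := p.antitone hxx'
  omega

lemma Icc_subset_image_content_rimHook {a b : ℕ} (hab : (a, b) ∈ p.cells) :
    Set.Icc ((b : ℤ) + 1 - p.colLen b) ((p.parts a : ℤ) - 1 - a) ⊆
      content '' p.rimHook a b := by
  rintro t ⟨htlo, hthi⟩
  set C := p.colLen b
  have haC : a < C := mem_cells_iff_lt_colLen.1 hab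
  have hCb : p.parts C ≤ b := not_lt.1 fun h => (mem_cells_iff_lt_colLen.1 h).false
  -- The row of the cell of content `t` is where the hand contents `λ_x - 1 - x` drop below `t`.
  obtain ⟨x, hax, hxC, htx, hxt⟩ :=
    exists_crossing_of_le_of_lt (φ := fun x => (p.parts x : ℤ) - 1 - x) (c := C - 1) (by omega)
      hthi (by rw [Nat.sub_add_cancel (by omega)]; omega)
  have hbx : (b : ℤ) ≤ t + x := by
    rcases lt_or_ge (x + 1) C with h | h
    · have : b < p.parts (x + 1) := mem_cells_iff_lt_colLen.2 h
      omega
    · omega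
  refine ⟨(x, (t + x).toNat), mem_rimHook_iff.2 ⟨?_, hax, ?_, ?_⟩, ?_⟩
  all_goals first | omega | show ((t + x).toNat : ℤ) - x = t; omega

lemma ncard_rimHook {a b : ℕ} (hab : (a, b) ∈ p.cells) :
    (p.rimHook a b).ncard = p.hookLen a b := by
  have himage : content '' p.rimHook a b =
      Set.Icc ((b : ℤ) + 1 - p.colLen b) ((p.parts a : ℤ) - 1 - a) :=
    Set.Subset.antisymm (Set.image_subset_iff.2 fun _ hz => content_mem_Icc_of_mem_rimHook hz)
      (Icc_subset_image_content_rimHook hab)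
  rw [← (injOn_content_rimHook a b).ncard_image, himage, ← Finset.coe_Icc,
    Set.ncard_coe_finset, Int.card_Icc]
  have := natCast_hookLen hab
  omega

lemma hookLen_eq_of_diff_rimHook_eq {q : Partition'} {a b c d : ℕ} (hsize : p.size = q.size)
    (hab : (a, b) ∈ p.cells) (hcd : (c, d) ∈ q.cells)
    (h : p.cells \ p.rimHook a b = q.cells \ q.rimHook c d) :
    p.hookLen a b = q.hookLen c d := by
  have hp := Set.ncard_sdiff_add_ncard_of_subset (p.rimHook_subset a b) p.cells_finite
  have hq := Set.ncard_sdiff_add_ncard_of_subset (q.rimHook_subset c d) q.cells_finite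
  rw [h, ncard_rimHook hab] at hp
  rw [ncard_rimHook hcd] at hq
  unfold size at hsize
  omega

lemma mem_diff_rimHook_iff_of_lt {a b d x : ℕ} (hbd : b < d) :
    (x, b) ∈ p.cells \ p.rimHook a d ↔ (x, b) ∈ p.cells :=
  ⟨And.left, fun hx => ⟨hx, fun hr => by have := (mem_rimHook_iff.1 hr).2.2.1; omega⟩⟩

lemma mem_diff_rimHook_iff_lt_of_parts_eq {b c d x : ℕ} (hcd : (c, d) ∈ p.cells)
    (hc : p.parts c = b + 1) :
    (x, b) ∈ p.cells \ p.rimHook c d ↔ x < c := by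
  have hd : d < p.parts c := hcd
  rw [Set.mem_sdiff, mem_rimHook_iff]
  constructor
  · rintro ⟨hx, hnot⟩
    by_contra! hcx
    have h1 : p.parts x ≤ p.parts c := p.antitone hcx
    have h2 : p.parts (x + 1) ≤ p.parts c := p.antitone (by omega)
    have hx' : b < p.parts x := hx
    exact hnot ⟨hx', hcx, by omega, by omega⟩
  · intro hxc
    have : p.parts c ≤ p.parts x := p.antitone hxc.le
    exact ⟨show b < p.parts x by omega, fun hr => by omega⟩

lemma colLen_eq_of_diff_rimHook_eq {q : Partition'} {a b c d m : ℕ} (hmb : m < b)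
    (hcd : (c, d) ∈ q.cells) (hc : q.parts c = m + 1)
    (h : p.cells \ p.rimHook a b = q.cells \ q.rimHook c d) : p.colLen m = c :=
  p.colLen_eq_of_forall_mem_iff fun x => by
    rw [← mem_diff_rimHook_iff_of_lt (a := a) hmb, h, mem_diff_rimHook_iff_lt_of_parts_eq hcd hc]

end Partition'

theorem stmt19_general (e n : ℕ) (lam mu : Partition')
    (hn : lam.size = n) (hmn : mu.size = n)
    (i m j k l : ℕ)
    (hmcell : (i, m) ∈ lam.cells) (hjcell : (i, j) ∈ lam.cells) (hmj : m < j)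
    (hy : (k, l) ∈ mu.cells)
    (hrel : lam.cells \ lam.rimHook i j = mu.cells \ mu.rimHook k l)
    (hhand : mu.parts k = m + 1)
    (hres : Partition'.footRes e lam j = Partition'.footRes e mu l) :
    e ∣ lam.hookLen i m := by
  have hhook := Partition'.hookLen_eq_of_diff_rimHook_eq (hn.trans hmn.symm) hjcell hy hrel
  have hcol := Partition'.colLen_eq_of_diff_rimHook_eq hmj hy hhand hrel
  have hfeet : (lam.hookLen i m : ℤ) =
      ((j : ℤ) + 1 - lam.colLen j) - ((l : ℤ) + 1 - mu.colLen l) := by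
    have := Partition'.natCast_hookLen hjcell
    have := Partition'.natCast_hookLen hy
    rw [Partition'.natCast_hookLen hmcell, hcol]
    omega
  rw [← ZMod.natCast_eq_zero_iff, ← Int.cast_natCast, hfeet, Int.cast_sub,
    ← Partition'.footRes, ← Partition'.footRes, hres, sub_self]

/-- Let `λ` contain nodes `(i,m)` and `(i,j)` in the same row with `m < j`, and suppose
`e ∣ h^λ_{(i,j)}`.  If `μ` is obtained from `λ` by unwrapping the rim hook `r^λ_{(i,j)}` and
wrapping a rim hook of the same length back on with hand node in column `m`, in the manner
where the foot residues agree (corresponding to moving one bead down and another up on the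
same runner `f`), then `e ∣ h^λ_{(i,m)}` as well. -/
theorem stmt19 (e n : ℕ) (he : 2 ≤ e) (lam mu : Partition')
    (hn : lam.size = n) (hmn : mu.size = n)
    (i m j k l : ℕ)
    (hmcell : (i, m) ∈ lam.cells) (hjcell : (i, j) ∈ lam.cells) (hmj : m < j)
    (hdivj : e ∣ lam.hookLen i j)
    (hy : (k, l) ∈ mu.cells)
    (hrel : lam.cells \ lam.rimHook i j = mu.cells \ mu.rimHook k l)
    (hhand : mu.parts k = m + 1)
    (hres : Partition'.footRes e lam j = Partition'.footRes e mu l) :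
    e ∣ lam.hookLen i m :=
  stmt19_general e n lam mu hn hmn i m j k l hmcell hjcell hmj hy hrel hhand hres
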